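/- Let A be a finite set of vectors in R^d, u : A → N, G = Σ_{a∈A} u(a)aaᵀ invertible, u = Σ_a u(a), and Δ : A → R with |Δ_a| ≤ ε. Then for any b ∈ R^d: |bᵀ G^{-1} Σ_{a∈A} u(a) Δ_a a| ≤ ε √(u · bᵀ G^{-1} b). -/
import Mathlib
open Matrix Finset

private lemma mulVec_sum' {ι : Type*} [Fintype ι] {d : ℕ} (M : Matrix (Fin d) (Fin d) ℝ)
    (f : ι → Fin d → ℝ) : M.mulVec (∑ i, f i) = ∑ i, M.mulVec (f i) := by
  ext j
  simp only [Matrix.mulVec, dotProduct, Finset.sum_apply, Finset.mul_sum]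
  rw [Finset.sum_comm]

private lemma sum_mulVec' {ι : Type*} [Fintype ι] {d : ℕ} (M : ι → Matrix (Fin d) (Fin d) ℝ)
    (v : Fin d → ℝ) : (∑ i, M i).mulVec v = ∑ i, (M i).mulVec v := by
  ext j
  simp only [Matrix.mulVec, dotProduct, Finset.sum_apply, Matrix.sum_apply,
    Finset.sum_mul]
  rw [Finset.sum_comm]

private lemma vecMulVec_mulVec' {d : ℕ} (w v x : Fin d → ℝ) :
    (vecMulVec w v).mulVec x = (v ⬝ᵥ x) • w := by
  ext j
  simp [vecMulVec_apply, Matrix.mulVec, dotProduct, Finset.mul_sum, mul_comm,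
    mul_assoc, mul_left_comm]

private lemma dotProduct_sum' {ι : Type*} [Fintype ι] {d : ℕ} (v : Fin d → ℝ)
    (f : ι → Fin d → ℝ) : v ⬝ᵥ (∑ i, f i) = ∑ i, v ⬝ᵥ f i := by
  simp only [dotProduct, Finset.sum_apply, Finset.mul_sum]
  rw [Finset.sum_comm]

/-- Misspecification error of a weighted least-squares estimator:
`|bᵀ G⁻¹ ∑_a u(a) Δ_a a| ≤ ε √(u · bᵀ G⁻¹ b)` where `u = ∑_a u(a)`. -/
theorem stmt9 {ι : Type*} [Fintype ι] (d : ℕ) (ε : ℝ)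
    (a : ι → (Fin d → ℝ)) (u : ι → ℕ)
    (G : Matrix (Fin d) (Fin d) ℝ)
    (hG : G = ∑ i, (u i : ℝ) • vecMulVec (a i) (a i))
    (hGinv : IsUnit G.det)
    (Δ : ι → ℝ) (hΔ : ∀ i, |Δ i| ≤ ε) (b : Fin d → ℝ) :
    |b ⬝ᵥ G⁻¹.mulVec (∑ i, ((u i : ℝ) * Δ i) • a i)|
      ≤ ε * Real.sqrt ((∑ i, (u i : ℝ)) * (b ⬝ᵥ G⁻¹.mulVec b)) := by
  rcases isEmpty_or_nonempty ι with hι | hι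
  · simp
  set c : ι → ℝ := fun i => b ⬝ᵥ G⁻¹.mulVec (a i) with hc
  have hε : 0 ≤ ε := le_trans (abs_nonneg _) (hΔ (Classical.arbitrary ι))
  have hGsym : Gᵀ = G := by
    rw [hG]
    simp only [transpose_sum, transpose_smul]
    refine Finset.sum_congr rfl fun i _ => ?_
    congr 1
    ext j k
    simp [vecMulVec_apply, mul_comm]
  have hGisym : (G⁻¹)ᵀ = G⁻¹ := by rw [Matrix.transpose_nonsing_inv, hGsym]
  have hd : ∀ i, a i ⬝ᵥ G⁻¹.mulVec b = c i := by
    intro i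
    rw [hc, Matrix.dotProduct_mulVec, ← Matrix.mulVec_transpose, hGisym, dotProduct_comm]
  have hS : ∑ i, (u i : ℝ) * c i ^ 2 = b ⬝ᵥ G⁻¹.mulVec b := by
    have hHG : G⁻¹ * G = 1 := Matrix.nonsing_inv_mul _ hGinv
    have hexp0 : ∀ v : Fin d → ℝ,
        G.mulVec v = ∑ i, ((u i : ℝ) * (a i ⬝ᵥ v)) • a i := by
      intro v
      rw [hG, sum_mulVec']
      refine Finset.sum_congr rfl fun i _ => ?_
      rw [Matrix.smul_mulVec, vecMulVec_mulVec', smul_smul]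
    have hexp : G.mulVec (G⁻¹.mulVec b) = ∑ i, ((u i : ℝ) * c i) • a i := by
      rw [hexp0]
      exact Finset.sum_congr rfl fun i _ => by rw [hd i]
    have hkey : b ⬝ᵥ G⁻¹.mulVec b
        = b ⬝ᵥ G⁻¹.mulVec (∑ i, ((u i : ℝ) * c i) • a i) := by
      rw [← hexp, Matrix.mulVec_mulVec, hHG, Matrix.one_mulVec]
    rw [hkey, mulVec_sum', dotProduct_sum' _ _]
    refine Finset.sum_congr rfl fun i _ => ?_
    rw [Matrix.mulVec_smul, dotProduct_smul, smul_eq_mul, hc]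
    ring
  have hL : b ⬝ᵥ G⁻¹.mulVec (∑ i, ((u i : ℝ) * Δ i) • a i) = ∑ i, ((u i : ℝ) * Δ i) * c i := by
    rw [mulVec_sum', dotProduct_sum' _ _]
    refine Finset.sum_congr rfl fun i _ => ?_
    rw [Matrix.mulVec_smul, dotProduct_smul, smul_eq_mul]
  rw [hL]
  have h1 : |∑ i, ((u i : ℝ) * Δ i) * c i| ≤ ε * ∑ i, (u i : ℝ) * |c i| := by
    calc |∑ i, ((u i : ℝ) * Δ i) * c i| ≤ ∑ i, |((u i : ℝ) * Δ i) * c i| :=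
          Finset.abs_sum_le_sum_abs _ _
      _ ≤ ∑ i, ε * ((u i : ℝ) * |c i|) := by
          refine Finset.sum_le_sum fun i _ => ?_
          rw [abs_mul, abs_mul, Nat.abs_cast]
          have h := hΔ i
          have h0 : (0:ℝ) ≤ (u i : ℝ) := Nat.cast_nonneg _
          calc (u i : ℝ) * |Δ i| * |c i| = |Δ i| * ((u i : ℝ) * |c i|) := by ring
            _ ≤ ε * ((u i : ℝ) * |c i|) :=
                mul_le_mul_of_nonneg_right h (mul_nonneg h0 (abs_nonneg _))
      _ = ε * ∑ i, (u i : ℝ) * |c i| := by rw [Finset.mul_sum]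
  refine h1.trans (mul_le_mul_of_nonneg_left ?_ hε)
  -- Cauchy-Schwarz
  have hcs : (∑ i, (u i : ℝ) * |c i|) ^ 2 ≤ (∑ i, (u i : ℝ)) * ∑ i, (u i : ℝ) * c i ^ 2 := by
    have := Finset.sum_mul_sq_le_sq_mul_sq Finset.univ
      (fun i => Real.sqrt (u i)) (fun i => Real.sqrt (u i) * |c i|)
    have e1 : ∀ i : ι, Real.sqrt (u i) * (Real.sqrt (u i) * |c i|) = (u i : ℝ) * |c i| := by
      intro i
      rw [← mul_assoc, Real.mul_self_sqrt (Nat.cast_nonneg _)]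
    have e2 : ∀ i : ι, Real.sqrt (u i) ^ 2 = (u i : ℝ) :=
      fun i => Real.sq_sqrt (Nat.cast_nonneg _)
    have e3 : ∀ i : ι, (Real.sqrt (u i) * |c i|) ^ 2 = (u i : ℝ) * c i ^ 2 := by
      intro i
      rw [mul_pow, e2, sq_abs]
    simpa only [e1, e2, e3] using this
  have hnn : 0 ≤ ∑ i, (u i : ℝ) * |c i| :=
    Finset.sum_nonneg fun i _ => mul_nonneg (Nat.cast_nonneg _) (abs_nonneg _)
  rw [← hS]
  calc ∑ i, (u i : ℝ) * |c i| = Real.sqrt ((∑ i, (u i : ℝ) * |c i|) ^ 2) :=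
        (Real.sqrt_sq hnn).symm
    _ ≤ Real.sqrt ((∑ i, (u i : ℝ)) * ∑ i, (u i : ℝ) * c i ^ 2) := Real.sqrt_le_sqrt hcs
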